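/- arXiv:math/0002068 — 3 statements merged into one kernel-verified Lean document; each statement's English description precedes it below -/
import Mathlib

section
/- For all real μ, the absolute value of the integral from 0 to μ of e^{-2iζ²} dζ is at most √3. -/
/-!
The integrand `x ↦ exp (i c x²)` has modulus one, so its integral over `[0, a]` is at most `a`.
Beyond `a` it oscillates: writing it as `(2icx)⁻¹ · d/dx exp (i c x²)` and integrating by parts,
the two boundary terms and the remaining integral of `(2icx²)⁻¹ · exp (i c x²)` add up to at most
`(|c| a)⁻¹`. For `c = -2` and `a = 1` this gives `3/2 ≤ √3`; negative `μ` reduce to positive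
ones because the integrand is even.
-/

open Complex intervalIntegral Set

lemma integral_inv_sq_of_pos {a b : ℝ} (ha : 0 < a) (hb : 0 < b) :
    ∫ x in a..b, (x ^ 2)⁻¹ = a⁻¹ - b⁻¹ := by
  have hpos : ∀ x ∈ uIcc a b, 0 < x := fun x hx ↦ lt_of_lt_of_le (lt_min ha hb) hx.1
  have hderiv : ∀ x ∈ uIcc a b, HasDerivAt (fun x : ℝ ↦ -x⁻¹) (x ^ 2)⁻¹ x := fun x hx ↦ by
    simpa using (hasDerivAt_inv (hpos x hx).ne').fun_neg
  have hcont : ContinuousOn (fun x : ℝ ↦ (x ^ 2)⁻¹) (uIcc a b) :=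
    ContinuousOn.inv₀ (by fun_prop) fun x hx ↦ (pow_pos (hpos x hx) 2).ne'
  rw [integral_eq_sub_of_hasDerivAt hderiv hcont.intervalIntegrable]
  ring

section QuadraticPhase

variable (c : ℝ)

lemma norm_cexp_mul_I_mul_sq (x : ℝ) : ‖cexp (c * I * x ^ 2)‖ = 1 := by
  rw [mul_right_comm, ← ofReal_pow, ← ofReal_mul]
  exact norm_exp_ofReal_mul_I _

lemma hasDerivAt_cexp_mul_I_mul_sq (x : ℝ) :
    HasDerivAt (fun x : ℝ ↦ cexp (c * I * x ^ 2)) (cexp (c * I * x ^ 2) * (2 * c * I * x)) x := by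
  have h := ((hasDerivAt_id x).ofReal_comp.pow 2).const_mul (c * I : ℂ)
  refine HasDerivAt.cexp (h.congr_deriv ?_)
  simp only [Nat.cast_ofNat, id_eq, Nat.add_one_sub_one, pow_one, ofReal_one, mul_one]
  ring

variable {c}

lemma integral_cexp_mul_I_mul_sq_eq (hc : c ≠ 0) {a b : ℝ} (ha : 0 < a) (hb : 0 < b) :
    ∫ x in a..b, cexp (c * I * x ^ 2) =
      (2 * c * I * b)⁻¹ * cexp (c * I * b ^ 2) - (2 * c * I * a)⁻¹ * cexp (c * I * a ^ 2) +
        ∫ x in a..b, (2 * c * I * x ^ 2)⁻¹ * cexp (c * I * x ^ 2) := by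
  have hpos : ∀ x ∈ uIcc a b, 0 < x := fun x hx ↦ lt_of_lt_of_le (lt_min ha hb) hx.1
  have hne : ∀ x ∈ uIcc a b, (2 * c * I * x : ℂ) ≠ 0 := fun x hx ↦ by
    simpa [hc, I_ne_zero] using (hpos x hx).ne'
  have hu : ∀ x ∈ uIcc a b, HasDerivAt (fun x : ℝ ↦ (2 * c * I * x : ℂ)⁻¹)
      (-(2 * c * I * x ^ 2 : ℂ)⁻¹) x := fun x hx ↦ by
    have h := ((hasDerivAt_id x).ofReal_comp.const_mul (2 * c * I : ℂ)).inv
      (by simpa using hne x hx)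
    refine h.congr_deriv ?_
    have := hne x hx
    field_simp
    simp
  have hcont : ContinuousOn (fun x : ℝ ↦ (2 * c * I * x ^ 2 : ℂ)⁻¹) (uIcc a b) :=
    ContinuousOn.inv₀ (by fun_prop) fun x hx ↦ by
      simpa [hc, I_ne_zero] using (hpos x hx).ne'
  have parts := integral_mul_deriv_eq_deriv_mul hu (fun x _ ↦ hasDerivAt_cexp_mul_I_mul_sq c x)
    hcont.neg.intervalIntegrable (by apply Continuous.intervalIntegrable; fun_prop)
  simp only [neg_mul, integral_neg, sub_neg_eq_add] at parts
  rw [← parts]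
  refine integral_congr fun x hx ↦ ?_
  simp only [mul_comm (cexp _), inv_mul_cancel_left₀ (hne x hx)]

lemma norm_integral_cexp_mul_I_mul_sq_le (hc : c ≠ 0) {a b : ℝ} (ha : 0 < a) (hab : a ≤ b) :
    ‖∫ x in a..b, cexp (c * I * x ^ 2)‖ ≤ (|c| * a)⁻¹ := by
  have hb : 0 < b := ha.trans_le hab
  have boundary : ∀ x : ℝ, 0 < x → ‖(2 * c * I * x)⁻¹ * cexp (c * I * x ^ 2)‖ = (2 * |c| * x)⁻¹ :=
    fun x hx ↦ by simp [norm_cexp_mul_I_mul_sq, abs_of_pos hx]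
  have remainder : ‖∫ x in a..b, (2 * c * I * x ^ 2)⁻¹ * cexp (c * I * x ^ 2)‖ ≤
      (2 * |c|)⁻¹ * (a⁻¹ - b⁻¹) := calc
    _ ≤ ∫ x in a..b, ‖(2 * c * I * x ^ 2)⁻¹ * cexp (c * I * x ^ 2)‖ :=
      norm_integral_le_integral_norm hab
    _ = ∫ x in a..b, (2 * |c|)⁻¹ * (x ^ 2)⁻¹ := by
      congr 1 with x
      simp only [mul_inv_rev, inv_I, neg_mul, mul_neg, norm_neg, Complex.norm_mul, norm_inv,
        norm_pow, norm_real, Real.norm_eq_abs, sq_abs, norm_I, norm_ofNat, one_mul,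
        norm_cexp_mul_I_mul_sq, mul_one]
      ring
    _ = (2 * |c|)⁻¹ * (a⁻¹ - b⁻¹) := by rw [integral_const_mul, integral_inv_sq_of_pos ha hb]
  rw [integral_cexp_mul_I_mul_sq_eq hc ha hb]
  calc _ ≤ (2 * |c| * b)⁻¹ + (2 * |c| * a)⁻¹ + (2 * |c|)⁻¹ * (a⁻¹ - b⁻¹) := by
        grw [norm_add_le, norm_sub_le, boundary a ha, boundary b hb, remainder]
    _ = (|c| * a)⁻¹ := by field_simp; ring

end QuadraticPhase

lemma integral_zero_neg_of_even {E : Type*} [NormedAddCommGroup E] [NormedSpace ℝ E]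
    {f : ℝ → E} (hf : ∀ x, f (-x) = f x) (b : ℝ) :
    ∫ x in 0..-b, f x = -∫ x in 0..b, f x := by
  rw [← integral_symm, ← neg_zero, ← integral_comp_neg, neg_zero]
  simp only [hf]

lemma norm_integral_zero_cexp_mul_I_mul_sq_le {c : ℝ} (hc : c ≠ 0) {a : ℝ} (ha : 0 < a) (b : ℝ) :
    ‖∫ x in 0..b, cexp (c * I * x ^ 2)‖ ≤ a + (|c| * a)⁻¹ := by
  wlog hb : 0 ≤ b generalizing b
  · rw [← neg_neg b, integral_zero_neg_of_even (fun x ↦ by rw [ofReal_neg, neg_sq]), norm_neg]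
    exact this (-b) (by linarith)
  have integrable : ∀ a b : ℝ,
      IntervalIntegrable (fun x : ℝ ↦ cexp (c * I * x ^ 2)) MeasureTheory.volume a b :=
    fun a b ↦ by apply Continuous.intervalIntegrable; fun_prop
  have norm_integral_le_length : ∀ b, 0 ≤ b → ‖∫ x in 0..b, cexp (c * I * x ^ 2)‖ ≤ b :=
    fun b hb ↦ by
      simpa [abs_of_nonneg hb] using norm_integral_le_of_norm_le_const (a := 0) (b := b)
        (fun x _ ↦ (norm_cexp_mul_I_mul_sq c x).le)
  have hc' : 0 ≤ (|c| * a)⁻¹ := by positivity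
  rcases le_or_gt b a with hba | hab
  · linarith [norm_integral_le_length b hb]
  · rw [← integral_add_adjacent_intervals (integrable 0 a) (integrable a b)]
    grw [norm_add_le, norm_integral_le_length a ha.le,
      norm_integral_cexp_mul_I_mul_sq_le hc ha hab.le]

/-- For all real μ, the absolute value of the integral from 0 to μ of
`e^{-2iζ²} dζ` is at most √3. -/
theorem abs_fresnel_integral_le_sqrt_three (μ : ℝ) :
    ‖∫ ζ in (0:ℝ)..μ, Complex.exp (-2 * Complex.I * (ζ:ℂ)^2)‖ ≤ Real.sqrt 3 := by
  have h := norm_integral_zero_cexp_mul_I_mul_sq_le (c := -2) (by norm_num) one_pos μ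
  push_cast at h
  refine h.trans ?_
  rw [Real.le_sqrt (by positivity) (by norm_num)]
  norm_num
end

section
/- Fix L > 0 and an integer k ≥ 2. Suppose f ∈ C^k([L, ∞), ℂ) satisfies f(L) = f'(L) = ⋯ = f^{(k-1)}(L) = 0, the improper integral lim_{R→∞} ∫_L^R f(λ) e^{-2iλ²t} dλ exists for t ≠ 0, and sup_{λ>L} |λ² (A^k f)(λ)| < ∞, where (Af)(λ) = d/dλ (f(λ)/λ). Then |lim_{R→∞} ∫_L^R f(λ) e^{-2iλ²t} dλ| ≤ (1/(L · 4^k · |t|^k)) · sup_{λ>L} |λ² (A^k f)(λ)|. -/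
/-!
Write `e(λ) = exp(-2iλ²t)`, so that `e' = c λ e` with `c = -4it`. Then
`(g/λ · e)' = (A g) e + c g e`, and integrating over `[L, R]` gives
`c ∫ g e = (g(R)/R) e(R) - ∫ (A g) e` as soon as `g(L) = 0`. Applying this to
`g = f, A f, …, A^{k-1} f` (which vanish at `L` because all derivatives of `f` of order `< k` do)
and bounding the last integral by `∫_L^∞ M/λ² = M/L`, where `M = sup |λ² A^k f|`, yields
`|∫_L^R f e| ≤ ∑_{j<k} |A^j f(R)| / (R |c|^{j+1}) + M / (L |c|^k)`; the boundary terms vanish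
as `R → ∞`.
-/

open Filter Topology Set MeasureTheory

theorem iteratedDerivWithin_mul_eq_zero {𝕜 𝔸 : Type*} [NontriviallyNormedField 𝕜] [NormedRing 𝔸]
    [NormedAlgebra 𝕜 𝔸] {s : Set 𝕜} {x : 𝕜} {n : ℕ} {f g : 𝕜 → 𝔸} (hs : UniqueDiffOn 𝕜 s)
    (hx : x ∈ s) (hf : ContDiffOn 𝕜 n f s) (hg : ContDiffOn 𝕜 n g s)
    (hf0 : ∀ i ≤ n, iteratedDerivWithin i f s x = 0) :
    iteratedDerivWithin n (f * g) s x = 0 := by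
  rw [iteratedDerivWithin_mul hx hs (hf x hx) (hg x hx)]
  refine Finset.sum_eq_zero fun i hi => ?_
  rw [hf0 i (Nat.lt_succ_iff.mp (Finset.mem_range.mp hi)), mul_zero, zero_mul]

noncomputable def divDeriv (g : ℝ → ℂ) : ℝ → ℂ :=
  deriv fun x => g x / x

/-- The operator `A` of the paper, with the derivative taken within `s`: for `s = [L, ∞)` it is
meaningful also at the endpoint `L`, where `divDeriv` has a junk value. -/
noncomputable def divDerivWithin (s : Set ℝ) (g : ℝ → ℂ) : ℝ → ℂ :=
  derivWithin (fun x => g x / x) s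

section divDerivWithin

variable {s : Set ℝ} {x₀ : ℝ} {m : ℕ} {g : ℝ → ℂ}

theorem contDiffOn_ofReal_inv (hs0 : ∀ x ∈ s, x ≠ 0) :
    ContDiffOn ℝ m (fun x : ℝ => (x : ℂ)⁻¹) s :=
  Complex.ofRealCLM.contDiff.contDiffOn.inv fun x hx => Complex.ofReal_ne_zero.mpr (hs0 x hx)

theorem contDiffOn_divDerivWithin (hs : UniqueDiffOn ℝ s) (hs0 : ∀ x ∈ s, x ≠ 0)
    (hg : ContDiffOn ℝ (m + 1) g s) : ContDiffOn ℝ m (divDerivWithin s g) s := by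
  simp_rw [divDerivWithin, div_eq_mul_inv]
  exact (hg.mul (contDiffOn_ofReal_inv hs0)).derivWithin hs le_rfl

theorem iteratedDerivWithin_divDerivWithin_eq_zero (hs : UniqueDiffOn ℝ s)
    (hs0 : ∀ x ∈ s, x ≠ 0) (hx₀ : x₀ ∈ s) (hg : ContDiffOn ℝ (m + 1) g s)
    (hg0 : ∀ i < m + 1, iteratedDerivWithin i g s x₀ = 0) {i : ℕ} (hi : i < m) :
    iteratedDerivWithin i (divDerivWithin s g) s x₀ = 0 := by
  simp_rw [divDerivWithin, div_eq_mul_inv, ← iteratedDerivWithin_succ']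
  exact iteratedDerivWithin_mul_eq_zero (g := fun x : ℝ => (x : ℂ)⁻¹) hs hx₀
    (hg.of_le (by exact_mod_cast Nat.succ_le_succ hi.le)) (contDiffOn_ofReal_inv hs0)
    fun j hj => hg0 j (by omega)

theorem iterate_divDerivWithin_contDiffOn_and_vanishing {k : ℕ} {f : ℝ → ℂ} (hs : UniqueDiffOn ℝ s)
    (hs0 : ∀ x ∈ s, x ≠ 0) (hx₀ : x₀ ∈ s) (hf : ContDiffOn ℝ k f s)
    (hf0 : ∀ i < k, iteratedDerivWithin i f s x₀ = 0) {n : ℕ} (hn : n ≤ k) :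
    ContDiffOn ℝ (k - n : ℕ) ((divDerivWithin s)^[n] f) s ∧
      ∀ i < k - n, iteratedDerivWithin i ((divDerivWithin s)^[n] f) s x₀ = 0 := by
  induction n with
  | zero => exact ⟨hf, hf0⟩
  | succ n ih =>
    obtain ⟨hcont, hzero⟩ := ih (by omega)
    have hkn : k - n = k - (n + 1) + 1 := by omega
    rw [hkn] at hcont hzero
    rw [Function.iterate_succ_apply']
    exact ⟨contDiffOn_divDerivWithin hs hs0 hcont,
      fun i hi => iteratedDerivWithin_divDerivWithin_eq_zero hs hs0 hx₀ hcont hzero hi⟩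

theorem eqOn_iterate_divDerivWithin_interior (f : ℝ → ℂ) (n : ℕ) :
    EqOn ((divDerivWithin s)^[n] f) (divDeriv^[n] f) (interior s) := by
  induction n with
  | zero => exact fun _ _ => rfl
  | succ n ih =>
    intro x hx
    rw [Function.iterate_succ_apply', Function.iterate_succ_apply', divDerivWithin, divDeriv,
      derivWithin_of_mem_nhds (mem_interior_iff_mem_nhds.mp hx)]
    refine Filter.EventuallyEq.deriv_eq ?_
    filter_upwards [isOpen_interior.mem_nhds hx] with y hy
    rw [ih hy]

theorem hasDerivAt_div_divDerivWithin {x : ℝ} (hs0 : ∀ y ∈ s, y ≠ 0)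
    (hg : DifferentiableOn ℝ g s) (hx : s ∈ 𝓝 x) :
    HasDerivAt (fun y => g y / y) (divDerivWithin s g x) x :=
  ((hg.div Complex.ofRealCLM.differentiable.differentiableOn fun y hy =>
    Complex.ofReal_ne_zero.mpr (hs0 y hy)) x (mem_of_mem_nhds hx)).hasDerivWithinAt.hasDerivAt hx

end divDerivWithin

theorem norm_integral_mul_le_of_hasDerivAt_div {e : ℝ → ℂ} {c : ℂ}
    (he : ∀ x, HasDerivAt e (c * x * e x) x) (he1 : ∀ x, ‖e x‖ = 1) {a b : ℝ} (ha : 0 < a) (hab : a ≤ b) {g g' : ℝ → ℂ}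
    (hg : ContinuousOn g (Icc a b)) (hga : g a = 0)
    (hg' : ∀ x ∈ Ioo a b, HasDerivAt (fun y => g y / y) (g' x) x)
    (hint : IntervalIntegrable g' volume a b) :
    ‖c‖ * ‖∫ x in a..b, g x * e x‖ ≤ ‖g b‖ / b + ‖∫ x in a..b, g' x * e x‖ := by
  have hx0 : ∀ x ∈ Icc a b, (x : ℂ) ≠ 0 := fun x hx =>
    Complex.ofReal_ne_zero.mpr (ha.trans_le hx.1).ne'
  have he_cont : Continuous e := continuous_iff_continuousAt.mpr fun x => (he x).continuousAt
  have hge : IntervalIntegrable (fun x => g x * e x) volume a b :=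
    (hg.mul he_cont.continuousOn).intervalIntegrable_of_Icc hab
  have hg'e : IntervalIntegrable (fun x => g' x * e x) volume a b :=
    hint.mul_continuousOn he_cont.continuousOn
  have hFTC : ∫ x in a..b, (g' x * e x + c * (g x * e x)) = g b / b * e b - g a / a * e a := by
    refine intervalIntegral.integral_eq_sub_of_hasDerivAt_of_le hab
      ((hg.div Complex.continuous_ofReal.continuousOn hx0).mul he_cont.continuousOn)
      (fun x hx => ?_) (hg'e.add (hge.const_mul c))
    refine ((hg' x hx).mul (he x)).congr_deriv ?_
    field_simp [hx0 x (Ioo_subset_Icc_self hx)]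
  rw [intervalIntegral.integral_add hg'e (hge.const_mul c), intervalIntegral.integral_const_mul,
    hga, zero_div, zero_mul, sub_zero] at hFTC
  have hparts : c * ∫ x in a..b, g x * e x = g b / b * e b - ∫ x in a..b, g' x * e x := by
    rw [← hFTC]; ring
  calc ‖c‖ * ‖∫ x in a..b, g x * e x‖
      = ‖g b / b * e b - ∫ x in a..b, g' x * e x‖ := by rw [← norm_mul, hparts]
    _ ≤ ‖g b / b * e b‖ + ‖∫ x in a..b, g' x * e x‖ := norm_sub_le _ _
    _ = ‖g b‖ / b + ‖∫ x in a..b, g' x * e x‖ := by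
      rw [norm_mul, he1, mul_one, norm_div, Complex.norm_real,
        Real.norm_of_nonneg (ha.le.trans hab)]

noncomputable def chirp (t x : ℝ) : ℂ :=
  Complex.exp (-2 * Complex.I * (x : ℂ) ^ 2 * (t : ℂ))

theorem hasDerivAt_chirp (t x : ℝ) :
    HasDerivAt (chirp t) (-4 * Complex.I * t * x * chirp t x) x := by
  have hphase : HasDerivAt (fun y : ℝ => -2 * Complex.I * (y : ℂ) ^ 2 * (t : ℂ))
      (-4 * Complex.I * t * x) x := by
    convert (((hasDerivAt_pow 2 (x : ℂ)).const_mul (-2 * Complex.I)).mul_const (t : ℂ)).comp_ofReal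
      using 1
    ring
  exact hphase.cexp.congr_deriv (mul_comm _ _)

theorem norm_chirp (t x : ℝ) : ‖chirp t x‖ = 1 := by
  rw [chirp, Complex.norm_exp]
  norm_num [Complex.mul_re, Complex.mul_im, ← Complex.ofReal_pow]

theorem norm_integral_le_div_of_norm_le_div_sq {h : ℝ → ℂ} {a b M : ℝ} (ha : 0 < a)
    (hab : a ≤ b) (hM : 0 ≤ M) (hh : ∀ x ∈ Ioc a b, ‖h x‖ ≤ M / x ^ 2) :
    ‖∫ x in a..b, h x‖ ≤ M / a := by
  have hx0 : ∀ x ∈ uIcc a b, x ≠ 0 := fun x hx => (ha.trans_le (uIcc_of_le hab ▸ hx).1).ne'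
  have hint : IntervalIntegrable (fun x => M / x ^ 2) volume a b :=
    (continuousOn_const.div (continuousOn_pow 2) fun x hx =>
      pow_ne_zero 2 (hx0 x hx)).intervalIntegrable
  have hval : ∫ x in a..b, M / x ^ 2 = M / a - M / b := by
    rw [intervalIntegral.integral_eq_sub_of_hasDerivAt (f := fun x => -M * x⁻¹)
      (fun x hx => ((hasDerivAt_inv (hx0 x hx)).const_mul (-M)).congr_deriv (by ring)) hint]
    ring
  calc ‖∫ x in a..b, h x‖ ≤ ∫ x in a..b, M / x ^ 2 :=
        intervalIntegral.norm_integral_le_of_norm_le hab (ae_of_all _ hh) hint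
    _ ≤ M / a := by rw [hval]; linarith [div_nonneg hM (ha.trans_le hab).le]

theorem le_sum_div_pow_add_of_le_add_div {c M : ℝ} (hc : 0 < c) (k : ℕ) (T b : ℕ → ℝ)
    (hT : ∀ n < k, T n ≤ (b n + T (n + 1)) / c) (hTk : T k ≤ M) :
    T 0 ≤ ∑ j ∈ Finset.range k, b j / c ^ (j + 1) + M / c ^ k := by
  induction k generalizing T b with
  | zero => simpa using hTk
  | succ k ih =>
    have hshift := ih (fun n => T (n + 1)) (fun n => b (n + 1))
      (fun n hn => hT (n + 1) (by omega)) hTk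
    calc T 0 ≤ (b 0 + T 1) / c := hT 0 (by omega)
      _ ≤ (b 0 + (∑ j ∈ Finset.range k, b (j + 1) / c ^ (j + 1) + M / c ^ k)) / c :=
        div_le_div_of_nonneg_right (add_le_add_right hshift _) hc.le
      _ = ∑ j ∈ Finset.range (k + 1), b j / c ^ (j + 1) + M / c ^ (k + 1) := by
        rw [Finset.sum_range_succ', add_div, add_div, Finset.sum_div]
        simp only [div_div, ← pow_succ]
        ring

theorem norm_le_sSup_div_sq {h : ℝ → ℂ} {s : Set ℝ} {x : ℝ}
    (hbdd : BddAbove ((fun l : ℝ => ‖(l : ℂ) ^ 2 * h l‖) '' s)) (hx : x ∈ s) (hx0 : x ≠ 0) :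
    ‖h x‖ ≤ sSup ((fun l : ℝ => ‖(l : ℂ) ^ 2 * h l‖) '' s) / x ^ 2 := by
  rw [le_div_iff₀ (by positivity), mul_comm]
  have hle := le_csSup hbdd (mem_image_of_mem _ hx)
  rwa [norm_mul, norm_pow, Complex.norm_real, Real.norm_eq_abs, sq_abs] at hle

theorem norm_integral_mul_chirp_le {L R t M : ℝ} {k : ℕ} {f : ℝ → ℂ} (hL : 0 < L) (hLR : L ≤ R)
    (ht : t ≠ 0) (hf : ContDiffOn ℝ k f (Ici L))
    (hf0 : ∀ i < k, iteratedDerivWithin i f (Ici L) L = 0) (hM : 0 ≤ M)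
    (hbound : ∀ x ∈ Ioi L, ‖(divDerivWithin (Ici L))^[k] f x‖ ≤ M / x ^ 2) :
    ‖∫ x in L..R, f x * chirp t x‖ ≤ ∑ j ∈ Finset.range k,
      ‖(divDerivWithin (Ici L))^[j] f R‖ / R / (4 * |t|) ^ (j + 1) + M / L / (4 * |t|) ^ k := by
  set g := fun n => (divDerivWithin (Ici L))^[n] f
  have hs0 : ∀ x ∈ Ici L, x ≠ 0 := fun x hx => (hL.trans_le hx).ne'
  have hreg := fun n (hn : n ≤ k) =>
    iterate_divDerivWithin_contDiffOn_and_vanishing (uniqueDiffOn_Ici L) hs0 self_mem_Ici hf hf0 hn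
  have hc : ‖-4 * Complex.I * t‖ = 4 * |t| := by simp
  refine le_sum_div_pow_add_of_le_add_div (by positivity) k
    (fun n => ‖∫ x in L..R, g n x * chirp t x‖) _ (fun n hn => ?_) ?_
  · obtain ⟨hcont, hzero⟩ := hreg n hn.le
    have hnext : ContinuousOn (divDerivWithin (Ici L) (g n)) (Ici L) := by
      simpa only [g, Function.iterate_succ_apply'] using (hreg (n + 1) hn).1.continuousOn
    have hstep := norm_integral_mul_le_of_hasDerivAt_div (hasDerivAt_chirp t) (norm_chirp t) hL hLR
      (hcont.continuousOn.mono Icc_subset_Ici_self) (by simpa using hzero 0 (by omega))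
      (fun x hx => hasDerivAt_div_divDerivWithin hs0
        (hcont.differentiableOn (by exact_mod_cast (show k - n ≠ 0 by omega)))
        (Ici_mem_nhds hx.1))
      ((hnext.mono Icc_subset_Ici_self).intervalIntegrable_of_Icc hLR)
    rw [hc] at hstep
    rw [le_div_iff₀ (by positivity)]
    simpa only [g, Function.iterate_succ_apply', mul_comm] using hstep
  · refine norm_integral_le_div_of_norm_le_div_sq hL hLR hM fun x hx => ?_
    rw [norm_mul, norm_chirp, mul_one]
    exact hbound x hx.1

theorem improper_integral_decay_general (L : ℝ) (hL : 0 < L) (k : ℕ)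
    (f : ℝ → ℂ) (t : ℝ) (ht : t ≠ 0)
    (A : (ℝ → ℂ) → (ℝ → ℂ))
    (hA : ∀ g : ℝ → ℂ, A g = deriv (fun x : ℝ => g x / (x:ℂ)))
    (hf : ContDiffOn ℝ k f (Set.Ici L))
    (hvanish : ∀ n < k, iteratedDerivWithin n f (Set.Ici L) L = 0)
    (hdecay : ∀ n < k, Tendsto (fun l : ℝ => (A^[n] f) l / (l:ℂ)) atTop (nhds 0))
    (hbdd : BddAbove ((fun l : ℝ => ‖(l:ℂ)^2 * (A^[k] f) l‖) '' Set.Ioi L))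
    (I : ℂ)
    (hI : Tendsto (fun R : ℝ =>
        ∫ l in L..R, f l * Complex.exp (-2 * Complex.I * (l:ℂ)^2 * (t:ℂ)))
      atTop (nhds I)) :
    ‖I‖ ≤ (1 / (L * 4^k * |t|^k)) *
      sSup ((fun l : ℝ => ‖(l:ℂ)^2 * (A^[k] f) l‖) '' Set.Ioi L) := by
  obtain rfl : A = divDeriv := funext hA
  set M := sSup ((fun l : ℝ => ‖(l:ℂ)^2 * (divDeriv^[k] f) l‖) '' Set.Ioi L)
  have hagree (n : ℕ) : EqOn ((divDerivWithin (Ici L))^[n] f) (divDeriv^[n] f) (Ioi L) :=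
    interior_Ici (a := L) ▸ eqOn_iterate_divDerivWithin_interior f n
  have hM : 0 ≤ M :=
    (norm_nonneg _).trans (le_csSup hbdd (mem_image_of_mem _ (lt_add_one L)))
  have hbound (x : ℝ) (hx : x ∈ Ioi L) : ‖(divDerivWithin (Ici L))^[k] f x‖ ≤ M / x ^ 2 :=
    hagree k hx ▸ norm_le_sSup_div_sq hbdd hx (hL.trans hx).ne'
  have hboundary (j : ℕ) (hj : j < k) :
      Tendsto (fun R => ‖(divDerivWithin (Ici L))^[j] f R‖ / R) atTop (𝓝 0) := by
    refine (tendsto_zero_iff_norm_tendsto_zero.mp (hdecay j hj)).congr' ?_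
    filter_upwards [eventually_gt_atTop L] with R hR
    rw [norm_div, Complex.norm_real, Real.norm_of_nonneg (hL.trans hR).le, hagree j hR]
  have hlim : Tendsto (fun R => ∑ j ∈ Finset.range k,
      ‖(divDerivWithin (Ici L))^[j] f R‖ / R / (4 * |t|) ^ (j + 1) + M / L / (4 * |t|) ^ k)
      atTop (𝓝 (M / L / (4 * |t|) ^ k)) := by
    simpa using (tendsto_finsetSum _ fun j hj =>
      (hboundary j (Finset.mem_range.mp hj)).div_const _).add_const (M / L / (4 * |t|) ^ k)
  calc ‖I‖ ≤ M / L / (4 * |t|) ^ k :=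
        le_of_tendsto_of_tendsto hI.norm hlim <| (eventually_ge_atTop L).mono fun R hR =>
          norm_integral_mul_chirp_le hL hR ht hf hvanish hM hbound
    _ = 1 / (L * 4 ^ k * |t| ^ k) * M := by rw [mul_pow]; ring

/-- Fix `L > 0` and an integer `k ≥ 2`.  Suppose `f ∈ C^k([L,∞),ℂ)` satisfies
`f(L) = f'(L) = ⋯ = f^{(k-1)}(L) = 0`, the improper integral
`lim_{R→∞} ∫_L^R f(λ) e^{-2iλ²t} dλ` exists for `t ≠ 0`, and
`sup_{λ>L} |λ² (A^k f)(λ)| < ∞` where `(Af)(λ) = d/dλ (f(λ)/λ)`.  (One also assumes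
the boundary terms at infinity vanish: `(A^n f)(λ)/λ → 0` as `λ → ∞` for `n < k`.)
Then `‖lim‖ ≤ (1/(L·4^k·|t|^k)) · sup_{λ>L} |λ² (A^k f)(λ)|`. -/
theorem improper_integral_decay (L : ℝ) (hL : 0 < L) (k : ℕ) (hk : 2 ≤ k)
    (f : ℝ → ℂ) (t : ℝ) (ht : t ≠ 0)
    (A : (ℝ → ℂ) → (ℝ → ℂ))
    (hA : ∀ g : ℝ → ℂ, A g = deriv (fun x : ℝ => g x / (x:ℂ)))
    (hf : ContDiffOn ℝ k f (Set.Ici L))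
    (hvanish : ∀ n < k, iteratedDerivWithin n f (Set.Ici L) L = 0)
    (hdecay : ∀ n < k, Tendsto (fun l : ℝ => (A^[n] f) l / (l:ℂ)) atTop (nhds 0))
    (hbdd : BddAbove ((fun l : ℝ => ‖(l:ℂ)^2 * (A^[k] f) l‖) '' Set.Ioi L))
    (I : ℂ)
    (hI : Tendsto (fun R : ℝ =>
        ∫ l in L..R, f l * Complex.exp (-2 * Complex.I * (l:ℂ)^2 * (t:ℂ)))
      atTop (nhds I)) :
    ‖I‖ ≤ (1 / (L * 4^k * |t|^k)) *
      sSup ((fun l : ℝ => ‖(l:ℂ)^2 * (A^[k] f) l‖) '' Set.Ioi L) :=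
  improper_integral_decay_general L hL k f t ht A hA hf hvanish hdecay hbdd I hI
end

section
/- Let q : ℝ² → ℂ^N be a smooth bounded solution of the vector nonlinear Schrödinger equation i∂_t q + (1/2)∂_x² q + (qᵀq*) q = 0, and set V₀(x,t) := −qᵀ(x,t) q*(x,t) = −∑ₙ |qₙ(x,t)|². Suppose v(x,t) ∈ ℂ^{N+1} satisfies the compatible linear system X(λ,q)v = 0 and T(λ,q)v = 0 (the Lax pair of the paper) for some λ ∈ ℂ. Then the first component f(x,t) := v₁(x,t) satisfies the linear Schrödinger equation i∂_t f + (1/2)∂_x² f − V₀(x,t) f = 0. -/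
/-!
Differentiating the first row `f_x = -2iλ f + qᵀw` of `X(λ,q)v = 0` in `x` and using the
second row `w_x = -q* f` gives `f_xx = -2iλ f_x + q_xᵀw - (qᵀq*) f`. Substituting this and
the first row `f_t` of `T(λ,q)v = 0` into `i f_t + ½ f_xx`, the terms in `λ²`, `λ qᵀw` and
`q_xᵀw` cancel and only `-(qᵀq*) f = V₀ f` is left.
-/

open Finset

theorem HasDerivAt.unique_of_eq_const_mul_add_sum_mul {𝕜 𝔸 ι : Type*}
    [NontriviallyNormedField 𝕜] [NormedCommRing 𝔸] [NormedAlgebra 𝕜 𝔸] [Fintype ι]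
    {a : 𝔸} {f g : 𝕜 → 𝔸} {f' g' : 𝔸}
    {u v : ι → 𝕜 → 𝔸} {u' v' : ι → 𝔸} {x : 𝕜}
    (hg : HasDerivAt g g' x) (hf : HasDerivAt f f' x)
    (hu : ∀ n, HasDerivAt (u n) (u' n) x) (hv : ∀ n, HasDerivAt (v n) (v' n) x)
    (hgf : ∀ y, g y = a * f y + ∑ n, u n y * v n y) :
    g' = a * f' + ∑ n, u' n * v n x + ∑ n, u n x * v' n := by
  rw [add_assoc, ← sum_add_distrib]
  refine hg.unique ?_
  rw [show g = _ from funext hgf]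
  exact (hf.const_mul a).add (HasDerivAt.fun_sum fun n _ => (hu n).mul (hv n))

theorem sum_mul_neg_mul {R ι : Type*} [CommRing R] (s : Finset ι) (u c : ι → R) (r : R) :
    ∑ n ∈ s, u n * (-c n * r) = -(∑ n ∈ s, u n * c n) * r := by
  rw [neg_mul, sum_mul, ← sum_neg_distrib]
  exact sum_congr rfl fun n _ => by ring

theorem schrodinger_of_lax_relations {lam f fx fxx ft P S Sx : ℂ}
    (hfx : fx = -2 * Complex.I * lam * f + S)
    (hfxx : fxx = -2 * Complex.I * lam * fx + Sx + -P * f)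
    (hft : ft = -2 * Complex.I * lam ^ 2 * f + lam * S + Complex.I / 2 * P * f
      + Complex.I / 2 * Sx) :
    Complex.I * ft + 1 / 2 * fxx - (-P) * f = 0 := by
  linear_combination Complex.I * hft + 1 / 2 * hfxx - Complex.I * lam * hfx
    + (P * f + Sx) / 2 * Complex.I_sq

theorem lax_pair_first_component_solves_schrodinger_general (N : ℕ) (lam : ℂ)
    (q qx : ℝ → ℝ → Fin N → ℂ)
    (hqx : ∀ x t n, HasDerivAt (fun x' : ℝ => q x' t n) (qx x t n) x)
    (f fx fxx ft : ℝ → ℝ → ℂ)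
    (w wx : ℝ → ℝ → Fin N → ℂ)
    (hfx : ∀ x t, HasDerivAt (fun x' : ℝ => f x' t) (fx x t) x)
    (hfxx : ∀ x t, HasDerivAt (fun x' : ℝ => fx x' t) (fxx x t) x)
    (hwx : ∀ x t n, HasDerivAt (fun x' : ℝ => w x' t n) (wx x t n) x)
    -- the equation X(λ,q)v = 0:
    (hX1 : ∀ x t, fx x t = -2 * Complex.I * lam * f x t + ∑ n, q x t n * w x t n)
    (hX2 : ∀ x t n, wx x t n = -(starRingEnd ℂ) (q x t n) * f x t)
    -- the equation T(λ,q)v = 0: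
    (hT1 : ∀ x t, ft x t = -2 * Complex.I * lam^2 * f x t
        + lam * ∑ n, q x t n * w x t n
        + (Complex.I/2) * (∑ n, q x t n * (starRingEnd ℂ) (q x t n)) * f x t
        + (Complex.I/2) * ∑ n, qx x t n * w x t n) :
    ∀ x t, Complex.I * ft x t + (1/2) * fxx x t
        - (-(∑ n, q x t n * (starRingEnd ℂ) (q x t n))) * f x t = 0 := by
  intro x t
  have hfxx_eq := (hfxx x t).unique_of_eq_const_mul_add_sum_mul (hfx x t)
    (fun n => hqx x t n) (fun n => hwx x t n) (fun y => hX1 y t)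
  simp only [hX2, sum_mul_neg_mul] at hfxx_eq
  exact schrodinger_of_lax_relations (hX1 x t) hfxx_eq (hT1 x t)

/-- Squared-eigenfunction solution of the linear Schrödinger equation.  Let `q` be a
smooth bounded solution of the vector NLS equation
`i∂_t q + (1/2)∂_x² q + (qᵀq*)q = 0` and `V₀ = −qᵀq*`.  If `v = (f, w)` satisfies the
Lax pair `X(λ,q)v = 0`, `T(λ,q)v = 0` (written componentwise below with the
designated partial derivatives), then the first component `f` satisfies
`i∂_t f + (1/2)∂_x² f − V₀ f = 0`. -/
theorem lax_pair_first_component_solves_schrodinger (N : ℕ) (lam : ℂ)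
    (q qx qxx qt : ℝ → ℝ → Fin N → ℂ)
    (hqx : ∀ x t n, HasDerivAt (fun x' : ℝ => q x' t n) (qx x t n) x)
    (hqxx : ∀ x t n, HasDerivAt (fun x' : ℝ => qx x' t n) (qxx x t n) x)
    (hqt : ∀ x t n, HasDerivAt (fun t' : ℝ => q x t' n) (qt x t n) t)
    (hNLS : ∀ x t n, Complex.I * qt x t n + (1/2) * qxx x t n
        + (∑ m, q x t m * (starRingEnd ℂ) (q x t m)) * q x t n = 0)
    (f fx fxx ft : ℝ → ℝ → ℂ)
    (w wx wt : ℝ → ℝ → Fin N → ℂ)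
    (hfx : ∀ x t, HasDerivAt (fun x' : ℝ => f x' t) (fx x t) x)
    (hfxx : ∀ x t, HasDerivAt (fun x' : ℝ => fx x' t) (fxx x t) x)
    (hft : ∀ x t, HasDerivAt (fun t' : ℝ => f x t') (ft x t) t)
    (hwx : ∀ x t n, HasDerivAt (fun x' : ℝ => w x' t n) (wx x t n) x)
    (hwt : ∀ x t n, HasDerivAt (fun t' : ℝ => w x t' n) (wt x t n) t)
    -- the equation X(λ,q)v = 0:
    (hX1 : ∀ x t, fx x t = -2 * Complex.I * lam * f x t + ∑ n, q x t n * w x t n)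
    (hX2 : ∀ x t n, wx x t n = -(starRingEnd ℂ) (q x t n) * f x t)
    -- the equation T(λ,q)v = 0:
    (hT1 : ∀ x t, ft x t = -2 * Complex.I * lam^2 * f x t
        + lam * ∑ n, q x t n * w x t n
        + (Complex.I/2) * (∑ n, q x t n * (starRingEnd ℂ) (q x t n)) * f x t
        + (Complex.I/2) * ∑ n, qx x t n * w x t n)
    (hT2 : ∀ x t n, wt x t n = -lam * (starRingEnd ℂ) (q x t n) * f x t
        + (Complex.I/2) * ((starRingEnd ℂ) (qx x t n) * f x t
            - (starRingEnd ℂ) (q x t n) * ∑ m, q x t m * w x t m)) :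
    ∀ x t, Complex.I * ft x t + (1/2) * fxx x t
        - (-(∑ n, q x t n * (starRingEnd ℂ) (q x t n))) * f x t = 0 :=
  lax_pair_first_component_solves_schrodinger_general N lam q qx hqx f fx fxx ft w wx hfx hfxx hwx
    hX1 hX2 hT1
end
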